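/- arXiv:1803.08980 — 2 statements merged into one kernel-verified Lean document; each statement's English description precedes it below -/
import Mathlib

section
/- Suppose that for a fixed control value u* ∈ U the map x ↦ F(x,u*) is locally Lipschitz. Let ξ : [0,T) → ℝ^d (with 0 < T < ∞) satisfy ξ(0) = ξ0, ξ'(t) = F(ξ(t),u*) for all t ∈ [0,T), and the differential inequality W(ξ(t),u*) ≤ -σ·γ(V(ξ(t))) for all t ∈ [0,T). Then: (i) V(ξ(t)) ≤ V(ξ0) for all t ∈ [0,T), so ξ(t) ∈ B(ξ0) for all t and the range of ξ is bounded; (ii) ξ extends to a solution of the same differential equation on the closed interval [0,T] (the solution does not escape to infinity in finite time while the inequality holds). -/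
open Set Filter
open scoped InnerProductSpace Topology

/-!
Along `ξ` the function `V ∘ ξ` has derivative `⟪∇V(ξ), F(ξ, u*)⟫ ≤ -σ γ(V ξ) ≤ 0`, so it is
antitone and `ξ` stays in the sublevel set `{V ≤ V ξ₀}`, which is bounded because `V` is radially
unbounded. On the compact closure of this set `F(·, u*)` is bounded, so `ξ` is Lipschitz on
`[0, T)`; hence `ξ` has a limit `L` at `T`, and setting `ξ T := L` gives a solution on `[0, T]`,
the one-sided derivative at `T` being the limit `F(L, u*)` of the derivatives.
-/

lemma Continuous.nonneg_of_pos_on_Ioi {γ : ℝ → ℝ} (hγ : Continuous γ)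
    (hpos : ∀ v, 0 < v → 0 < γ v) {v : ℝ} (hv : 0 ≤ v) : 0 ≤ γ v := by
  have : Ioi (0 : ℝ) ⊆ {v | 0 ≤ γ v} := fun v hv => (hpos v hv).le
  exact (isClosed_le continuous_const hγ).closure_subset_iff.2 this (by rwa [closure_Ioi])

lemma isBounded_sublevel_of_coercive {E : Type*} [SeminormedAddCommGroup E] {V : E → ℝ}
    (hV : ∀ c : ℝ, ∃ R : ℝ, ∀ x, R ≤ ‖x‖ → c ≤ V x) (c : ℝ) :
    Bornology.IsBounded {x | V x ≤ c} := by
  obtain ⟨R, hR⟩ := hV (c + 1)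
  refine (Metric.isBounded_closedBall (x := 0) (r := R)).subset fun x (hx : V x ≤ c) => ?_
  rw [mem_closedBall_zero_iff]
  by_contra! h
  linarith [hR x h.le]

section Gradient

variable {E : Type*} [NormedAddCommGroup E] [InnerProductSpace ℝ E] [CompleteSpace E]

lemma DifferentiableAt.hasDerivWithinAt_comp_inner_gradient {V : E → ℝ} {ξ : ℝ → E} {ξ' : E}
    {s : Set ℝ} {t : ℝ} (hV : DifferentiableAt ℝ V (ξ t)) (hξ : HasDerivWithinAt ξ ξ' s t) :
    HasDerivWithinAt (V ∘ ξ) ⟪gradient V (ξ t), ξ'⟫_ℝ s t := by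
  have := (hasGradientAt_iff_hasFDerivAt.1 hV.hasGradientAt).comp_hasDerivWithinAt t hξ
  simpa only [InnerProductSpace.toDual_apply_apply] using this

lemma antitoneOn_comp_of_inner_gradient_nonpos {V : E → ℝ} {ξ ξ' : ℝ → E} {D : Set ℝ}
    (hD : Convex ℝ D) (hV : Differentiable ℝ V) (hξ : ∀ t ∈ D, HasDerivWithinAt ξ (ξ' t) D t)
    (hdecr : ∀ t ∈ D, ⟪gradient V (ξ t), ξ' t⟫_ℝ ≤ 0) : AntitoneOn (V ∘ ξ) D := by
  have hVξ t (ht : t ∈ D) := (hV (ξ t)).hasDerivWithinAt_comp_inner_gradient (hξ t ht)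
  refine antitoneOn_of_hasDerivWithinAt_nonpos hD (fun t ht => (hVξ t ht).continuousWithinAt)
    (fun t ht => ?_) (fun t ht => hdecr t (interior_subset ht))
  exact ((hVξ t (interior_subset ht)).hasDerivAt (mem_interior_iff_mem_nhds.1 ht)).hasDerivWithinAt

end Gradient

section Extension

variable {E : Type*} [NormedAddCommGroup E] [NormedSpace ℝ E]

lemma exists_tendsto_nhdsLT_of_norm_hasDerivWithinAt_le [CompleteSpace E] {ξ ξ' : ℝ → E}
    {a b C : ℝ} (hab : a < b) (hξ : ∀ t ∈ Ico a b, HasDerivWithinAt ξ (ξ' t) (Ico a b) t)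
    (hC : ∀ t ∈ Ico a b, ‖ξ' t‖ ≤ C) : ∃ L, Tendsto ξ (𝓝[<] b) (𝓝 L) := by
  have hlip : LipschitzOnWith C.toNNReal ξ (Ico a b) :=
    (convex_Ico a b).lipschitzOnWith_of_nnnorm_hasDerivWithin_le hξ fun t ht =>
      norm_toNNReal.symm.trans_le (Real.toNNReal_le_toNNReal (hC t ht))
  have hne : (𝓝[Ico a b] b).NeBot := nhdsWithin_Ico_eq_nhdsLT hab ▸ inferInstance
  rw [← nhdsWithin_Ico_eq_nhdsLT hab]
  exact CompleteSpace.complete <|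
    (cauchy_nhds.mono nhdsWithin_le_nhds).map_of_le hlip.uniformContinuousOn inf_le_right

lemma hasDerivWithinAt_Icc_update_of_tendsto {f : E → E} {ξ : ℝ → E} {a b : ℝ} {L : E}
    (hf : ContinuousAt f L) (hab : a < b)
    (hξ : ∀ t ∈ Ico a b, HasDerivWithinAt ξ (f (ξ t)) (Ico a b) t)
    (hL : Tendsto ξ (𝓝[<] b) (𝓝 L)) :
    ∀ t ∈ Icc a b, HasDerivWithinAt (Function.update ξ b L) (f (Function.update ξ b L t))
      (Icc a b) t := by
  set ξL := Function.update ξ b L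
  have hξL_b : ξL b = L := Function.update_self ..
  have hξL_ne : ∀ t ≠ b, ξL t = ξ t := fun t ht => Function.update_of_ne ht ..
  have hξL_eq : ∀ t < b, ξL =ᶠ[𝓝 t] ξ := fun t ht =>
    Filter.mem_of_superset (Iio_mem_nhds ht) fun s hs => hξL_ne s (ne_of_lt hs)
  have hderiv : ∀ t ∈ Ioo a b, HasDerivAt ξL (f (ξ t)) t := fun t ht =>
    ((hξ t (Ioo_subset_Ico_self ht)).hasDerivAt (Ico_mem_nhds ht.1 ht.2)).congr_of_eventuallyEq
      (hξL_eq t ht.2)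
  intro t ht
  rcases ht.2.lt_or_eq with htb | rfl
  · have hIco : Ico a b ∈ 𝓝[Icc a b] t :=
      mem_nhdsWithin.2 ⟨Iio b, isOpen_Iio, htb, fun s hs => ⟨hs.2.1, hs.1⟩⟩
    rw [hξL_ne t htb.ne]
    exact ((hξ t ⟨ht.1, htb⟩).mono_of_mem_nhdsWithin hIco).congr_of_eventuallyEq
      (eventually_nhdsWithin_of_eventually_nhds (hξL_eq t htb)) (hξL_ne t htb.ne)
  · have hcont : ContinuousWithinAt ξL (Ioo a t) t := by
      rw [ContinuousWithinAt, hξL_b]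
      refine (hL.mono_left (nhdsWithin_mono _ Ioo_subset_Iio_self)).congr' ?_
      filter_upwards [self_mem_nhdsWithin] with s hs using (hξL_ne s hs.2.ne).symm
    have hlim : Tendsto (deriv ξL) (𝓝[<] t) (𝓝 (f L)) := by
      refine (hf.tendsto.comp hL).congr' ?_
      filter_upwards [Ioo_mem_nhdsLT hab] with s hs using (hderiv s hs).deriv.symm
    rw [hξL_b]
    exact (hasDerivWithinAt_Iic_of_tendsto_deriv (fun s hs => (hderiv s hs).differentiableAt
      |>.differentiableWithinAt) hcont (Ioo_mem_nhdsLT hab) hlim).mono Icc_subset_Iic_self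

lemma exists_hasDerivWithinAt_Icc_of_isBounded [ProperSpace E] {f : E → E} {ξ : ℝ → E} {a b : ℝ}
    (hf : Continuous f) (hab : a < b)
    (hξ : ∀ t ∈ Ico a b, HasDerivWithinAt ξ (f (ξ t)) (Ico a b) t)
    (hbdd : Bornology.IsBounded (ξ '' Ico a b)) :
    ∃ ξext : ℝ → E, (∀ t ∈ Ico a b, ξext t = ξ t) ∧
      ∀ t ∈ Icc a b, HasDerivWithinAt ξext (f (ξext t)) (Icc a b) t := by
  obtain ⟨C, hC⟩ := hbdd.isCompact_closure.exists_bound_of_continuousOn hf.continuousOn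
  obtain ⟨L, hL⟩ := exists_tendsto_nhdsLT_of_norm_hasDerivWithinAt_le hab hξ
    fun t ht => hC _ (subset_closure (mem_image_of_mem ξ ht))
  exact ⟨Function.update ξ b L, fun t ht => Function.update_of_ne ht.2.ne _ _,
    hasDerivWithinAt_Icc_update_of_tendsto hf.continuousAt hab hξ hL⟩

end Extension

theorem statement0_general
    (d m : ℕ)
    (F : EuclideanSpace ℝ (Fin d) → EuclideanSpace ℝ (Fin m) → EuclideanSpace ℝ (Fin d))
    (V : EuclideanSpace ℝ (Fin d) → ℝ) (γ : ℝ → ℝ) (σ : ℝ)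
    (hσ0 : 0 < σ)
    (hγc : Continuous γ) (hγpos : ∀ v : ℝ, 0 < v → 0 < γ v)
    (hV : ContDiff ℝ 1 V) (hV0 : V 0 = 0) (hVpos : ∀ x, x ≠ 0 → 0 < V x)
    (hVrad : ∀ c : ℝ, ∃ R : ℝ, ∀ x : EuclideanSpace ℝ (Fin d), R ≤ ‖x‖ → c ≤ V x)
    -- the fixed control value and the local Lipschitz assumption on `F(·, u*)`
    (u_star : EuclideanSpace ℝ (Fin m))
    (hF : LocallyLipschitz (fun x => F x u_star))
    -- the solution on `[0, T)`
    (T : ℝ) (hT0 : 0 < T)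
    (ξ : ℝ → EuclideanSpace ℝ (Fin d)) (ξ0 : EuclideanSpace ℝ (Fin d))
    (hξ0 : ξ 0 = ξ0)
    (hode : ∀ t ∈ Ico (0 : ℝ) T, HasDerivWithinAt ξ (F (ξ t) u_star) (Ico (0 : ℝ) T) t)
    (hineq : ∀ t ∈ Ico (0 : ℝ) T,
      ⟪gradient V (ξ t), F (ξ t) u_star⟫_ℝ ≤ -σ * γ (V (ξ t))) :
    (∀ t ∈ Ico (0 : ℝ) T, V (ξ t) ≤ V ξ0) ∧
    (∀ t ∈ Ico (0 : ℝ) T, ξ t ∈ {x | V x ≤ V ξ0}) ∧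
    Bornology.IsBounded (ξ '' Ico (0 : ℝ) T) ∧
    (∃ ξext : ℝ → EuclideanSpace ℝ (Fin d),
      (∀ t ∈ Ico (0 : ℝ) T, ξext t = ξ t) ∧
      (∀ t ∈ Icc (0 : ℝ) T,
        HasDerivWithinAt ξext (F (ξext t) u_star) (Icc (0 : ℝ) T) t)) := by
  have hV_nonneg (x) : 0 ≤ V x := by
    rcases eq_or_ne x 0 with rfl | hx
    exacts [hV0.ge, (hVpos x hx).le]
  have hdecr : ∀ t ∈ Ico (0 : ℝ) T, ⟪gradient V (ξ t), F (ξ t) u_star⟫_ℝ ≤ 0 := fun t ht =>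
    (hineq t ht).trans <| neg_mul σ _ ▸ neg_nonpos.2 <|
      mul_nonneg hσ0.le (hγc.nonneg_of_pos_on_Ioi hγpos (hV_nonneg _))
  have hVle : ∀ t ∈ Ico (0 : ℝ) T, V (ξ t) ≤ V ξ0 := fun t ht => hξ0 ▸
    antitoneOn_comp_of_inner_gradient_nonpos (convex_Ico 0 T) (hV.differentiable one_ne_zero)
      hode hdecr (left_mem_Ico.2 hT0) ht ht.1
  have hbdd : Bornology.IsBounded (ξ '' Ico (0 : ℝ) T) :=
    (isBounded_sublevel_of_coercive hVrad (V ξ0)).subset (image_subset_iff.2 hVle)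
  exact ⟨hVle, hVle, hbdd, exists_hasDerivWithinAt_Icc_of_isBounded hF.continuous hT0 hode hbdd⟩

/-- If `ξ` solves `ξ' = F(ξ, u*)` on `[0,T)` (with `F(·,u*)` locally Lipschitz)
and satisfies the differential inequality `W(ξ(t),u*) ≤ -σ·γ(V(ξ(t)))` there, then
(i) `V(ξ(t)) ≤ V(ξ0)` on `[0,T)` (so `ξ` stays in the sublevel set `B(ξ0)`), the range of `ξ`
on `[0,T)` is bounded, and (ii) `ξ` extends to a solution of the same ODE on `[0,T]`. -/
theorem statement0
    (d m : ℕ)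
    (F : EuclideanSpace ℝ (Fin d) → EuclideanSpace ℝ (Fin m) → EuclideanSpace ℝ (Fin d))
    (U : Set (EuclideanSpace ℝ (Fin m)))
    (𝒰 : EuclideanSpace ℝ (Fin d) → EuclideanSpace ℝ (Fin m))
    (V : EuclideanSpace ℝ (Fin d) → ℝ) (γ : ℝ → ℝ) (σ : ℝ)
    (hσ0 : 0 < σ) (hσ1 : σ < 1)
    (hγc : Continuous γ) (hγpos : ∀ v : ℝ, 0 < v → 0 < γ v)
    (hV : ContDiff ℝ 1 V) (hV0 : V 0 = 0) (hVpos : ∀ x, x ≠ 0 → 0 < V x)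
    (hVrad : ∀ c : ℝ, ∃ R : ℝ, ∀ x : EuclideanSpace ℝ (Fin d), R ≤ ‖x‖ → c ≤ V x)
    (h𝒰U : ∀ x, 𝒰 x ∈ U)
    (hfeed : ∀ x, x ≠ 0 → ⟪gradient V x, F x (𝒰 x)⟫_ℝ ≤ -γ (V x))
    -- the fixed control value and the local Lipschitz assumption on `F(·, u*)`
    (u_star : EuclideanSpace ℝ (Fin m)) (hu_star : u_star ∈ U)
    (hF : LocallyLipschitz (fun x => F x u_star))
    -- the solution on `[0, T)`
    (T : ℝ) (hT0 : 0 < T)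
    (ξ : ℝ → EuclideanSpace ℝ (Fin d)) (ξ0 : EuclideanSpace ℝ (Fin d))
    (hξ0 : ξ 0 = ξ0)
    (hode : ∀ t ∈ Ico (0 : ℝ) T, HasDerivWithinAt ξ (F (ξ t) u_star) (Ico (0 : ℝ) T) t)
    (hineq : ∀ t ∈ Ico (0 : ℝ) T,
      ⟪gradient V (ξ t), F (ξ t) u_star⟫_ℝ ≤ -σ * γ (V (ξ t))) :
    (∀ t ∈ Ico (0 : ℝ) T, V (ξ t) ≤ V ξ0) ∧
    (∀ t ∈ Ico (0 : ℝ) T, ξ t ∈ {x | V x ≤ V ξ0}) ∧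
    Bornology.IsBounded (ξ '' Ico (0 : ℝ) T) ∧
    (∃ ξext : ℝ → EuclideanSpace ℝ (Fin d),
      (∀ t ∈ Ico (0 : ℝ) T, ξext t = ξ t) ∧
      (∀ t ∈ Icc (0 : ℝ) T,
        HasDerivWithinAt ξext (F (ξext t) u_star) (Icc (0 : ℝ) T) t)) :=
  statement0_general d m F V γ σ hσ0 hγc hγpos hV hV0 hVpos hVrad u_star hF T hT0 ξ ξ0 hξ0 hode
    hineq
end

section
/- (Dwell-time positivity of the event-triggered algorithm.) Let Assumptions 1–4' hold and let γ be either non-decreasing or C¹. Then for every compact set K ⊆ ℝ^d there exists ε > 0 with the following property. Let x : [0,T) → ℝ^d be continuous with x(0) = x0 ∈ K, and let t_0 = 0 < t_1 < t_2 < … be sampling instants such that for each n: x(t_n) ≠ 0, on [t_n, t_{n+1}) the function x satisfies x'(t) = F(x(t), 𝒰(x(t_n))), W(x(t), 𝒰(x(t_n))) ≤ -σ·γ(V(x(t))) for all t ∈ [t_n, t_{n+1}], and the triggering equality W(x(t_{n+1}), 𝒰(x(t_n))) = -σ·γ(V(x(t_{n+1}))) holds at t_{n+1}. Then t_{n+1}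 − t_n ≥ ε for every n; i.e., the dwell-time 𝔗(x0) := inf_n (t_{n+1} − t_n) is uniformly positive over initial conditions in any compact set. -/
/-!
Along each sampling interval `W ≤ -σ γ(V) ≤ 0`, so `V` decreases and the trajectory stays in the
compact sublevel set `{V ≤ max_K V}`, on which the constants of Assumptions 2–4' are uniform.
At a sampling instant `p` the feedback makes `W(p) = -w ≤ -γ(V p) < 0`, whereas at the next
instant the trigger forces `W = -σ γ(V)`, so `W` has to rise by about `(1 - σ) w`. Grönwall bounds
the displacement by `2 |F(p)| τ`, and Assumption 4' turns every product of `|∇V(p)|` and `|F(p)|`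
into a multiple of `w`; hence both the rise of `W` and the drop of `V` (which controls the change
of `γ(V)`) are `O(w τ)`, and `w` cancels, leaving a lower bound on `τ`.
-/

open Set Filter
open scoped InnerProductSpace Gradient

section General

variable {E : Type*} [NormedAddCommGroup E]

theorem isCompact_setOf_le_of_coercive [ProperSpace E] {V : E → ℝ} (hV : Continuous V)
    (hVrad : ∀ c : ℝ, ∃ R : ℝ, ∀ x : E, R ≤ ‖x‖ → c ≤ V x) (c : ℝ) :
    IsCompact {x | V x ≤ c} := by
  obtain ⟨R, hR⟩ := hVrad (c + 1)
  refine (isCompact_closedBall 0 R).of_isClosed_subset (isClosed_le hV continuous_const) ?_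
  intro x hx
  rw [Metric.mem_closedBall, dist_zero_right]
  by_contra! h
  linarith [hR x h.le, show V x ≤ c from hx]

theorem norm_sub_le_two_mul_of_hasDerivWithinAt [NormedSpace ℝ E] {x v : ℝ → E} {a b K t : ℝ}
    (hx : ContinuousOn x (Icc a b))
    (hv : ∀ s ∈ Ico a b, HasDerivWithinAt x (v s) (Ico a b) s)
    (hlip : ∀ s ∈ Ico a b, ‖v s - v a‖ ≤ K * ‖x s - x a‖) (hK : 0 < K) (hKτ : K * (b - a) ≤ 1)
    (ht : t ∈ Icc a b) : ‖x t - x a‖ ≤ 2 * ‖v a‖ * (t - a) := by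
  have hv' : ∀ s ∈ Ico a b, HasDerivWithinAt (fun r => x r - x a) (v s) (Ici s) s :=
    fun s hs => ((hv s hs).sub_const (x a)).mono_of_mem_nhdsWithin
      (mem_of_superset (Ico_mem_nhdsGE hs.2) (Ico_subset_Ico_left hs.1))
  have hbound : ∀ s ∈ Ico a b, ‖v s‖ ≤ K * ‖x s - x a‖ + ‖v a‖ := fun s hs => by
    linarith [norm_le_norm_add_norm_sub' (v s) (v a), hlip s hs]
  have hgron := norm_le_gronwallBound_of_norm_deriv_right_le (δ := 0)
    (hx.sub continuousOn_const) hv' (by simp) hbound t ht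
  have hKt : |K * (t - a)| ≤ 1 := by
    rw [abs_of_nonneg (mul_nonneg hK.le (sub_nonneg.2 ht.1))]
    exact hKτ.trans' (mul_le_mul_of_nonneg_left (by linarith [ht.2]) hK.le)
  have hexp := (le_abs_self _).trans (Real.abs_exp_sub_one_le hKt)
  rw [abs_of_nonneg (mul_nonneg hK.le (sub_nonneg.2 ht.1))] at hexp
  simp only [gronwallBound_of_K_ne_0 hK.ne', zero_mul, zero_add, Pi.sub_apply] at hgron
  calc ‖x t - x a‖ ≤ ‖v a‖ / K * (Real.exp (K * (t - a)) - 1) := hgron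
    _ ≤ ‖v a‖ / K * (2 * (K * (t - a))) := mul_le_mul_of_nonneg_left hexp (by positivity)
    _ = 2 * ‖v a‖ * (t - a) := by field_simp

theorem nonneg_of_continuous_of_pos {γ : ℝ → ℝ} (hγ : Continuous γ)
    (hγpos : ∀ v, 0 < v → 0 < γ v) {v : ℝ} (hv : 0 ≤ v) : 0 ≤ γ v := by
  have h : closure (Ioi (0 : ℝ)) ⊆ {v | 0 ≤ γ v} :=
    (isClosed_le continuous_const hγ).closure_subset_iff.2 fun v hv => (hγpos v hv).le
  exact h (by rwa [closure_Ioi])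

theorem exists_le_add_mul_sub_of_monotoneOn_or_contDiff {γ : ℝ → ℝ}
    (hγ : MonotoneOn γ (Ici 0) ∨ ContDiff ℝ 1 γ) (c : ℝ) :
    ∃ Λ : ℝ, 0 ≤ Λ ∧ ∀ ⦃v w : ℝ⦄, 0 ≤ v → v ≤ w → w ≤ c → γ v ≤ γ w + Λ * (w - v) := by
  rcases hγ with hmono | hC1
  · refine ⟨0, le_rfl, fun v w hv hvw _ => ?_⟩
    simpa using hmono (mem_Ici.2 hv) (mem_Ici.2 (hv.trans hvw)) hvw
  · obtain ⟨Λ, hΛ⟩ := hC1.locallyLipschitz.locallyLipschitzOn.exists_lipschitzOnWith_of_compact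
      (isCompact_Icc (a := 0) (b := c))
    refine ⟨Λ, Λ.2, fun v w hv hvw hwc => ?_⟩
    have h := hΛ.dist_le_mul w ⟨hv.trans hvw, hwc⟩ v ⟨hv, hvw.trans hwc⟩
    rw [Real.dist_eq, Real.dist_eq, abs_of_nonneg (sub_nonneg.2 hvw)] at h
    linarith [neg_abs_le (γ w - γ v)]

end General

section Gradient

variable {E : Type*} [NormedAddCommGroup E] [InnerProductSpace ℝ E] [CompleteSpace E]

theorem HasGradientAt.comp_hasDerivWithinAt {V : E → ℝ} {g v : E} {x : ℝ → E} {s : Set ℝ}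
    {t : ℝ} (hV : HasGradientAt V g (x t)) (hx : HasDerivWithinAt x v s t) :
    HasDerivWithinAt (fun r => V (x r)) ⟪g, v⟫_ℝ s t := by
  have h := (hasGradientAt_iff_hasFDerivAt.1 hV).comp_hasDerivWithinAt t hx
  rwa [InnerProductSpace.toDual_apply_apply] at h

omit [CompleteSpace E] in
theorem inner_sub_inner_le (g f g' f' : E) :
    ⟪g', f'⟫_ℝ - ⟪g, f⟫_ℝ ≤ ‖g' - g‖ * ‖f'‖ + ‖g‖ * ‖f' - f‖ := by
  have h : ⟪g', f'⟫_ℝ - ⟪g, f⟫_ℝ = ⟪g' - g, f'⟫_ℝ + ⟪g, f' - f⟫_ℝ := by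
    rw [inner_sub_left, inner_sub_right]; ring
  rw [h]
  exact add_le_add (real_inner_le_norm _ _) (real_inner_le_norm _ _)

variable {V : E → ℝ} {x v : ℝ → E} {a b : ℝ}

theorem hasDerivAt_comp_of_mem_Ioo (hV : Differentiable ℝ V)
    (hv : ∀ r ∈ Ico a b, HasDerivWithinAt x (v r) (Ico a b) r) {t : ℝ} (ht : t ∈ Ioo a b) :
    HasDerivAt (fun r => V (x r)) ⟪∇ V (x t), v t⟫_ℝ t :=
  ((hV (x t)).hasGradientAt.comp_hasDerivWithinAt
    (hv t (Ioo_subset_Ico_self ht))).hasDerivAt (Ico_mem_nhds ht.1 ht.2)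

theorem sub_le_mul_sub_of_neg_le_inner_gradient {B : ℝ} (hV : Differentiable ℝ V)
    (hx : ContinuousOn x (Icc a b)) (hv : ∀ r ∈ Ico a b, HasDerivWithinAt x (v r) (Ico a b) r)
    (hB : ∀ r ∈ Ioo a b, -B ≤ ⟪∇ V (x r), v r⟫_ℝ) (hab : a ≤ b) :
    V (x a) - V (x b) ≤ B * (b - a) := by
  have hd : ∀ r ∈ interior (Icc a b), HasDerivAt (fun r => V (x r)) ⟪∇ V (x r), v r⟫_ℝ r :=
    fun r hr => hasDerivAt_comp_of_mem_Ioo hV hv (by rwa [interior_Icc] at hr)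
  rw [← interior_Icc] at hB
  have h := (convex_Icc a b).mul_sub_le_image_sub_of_le_deriv (f := fun r => V (x r))
    (hV.continuous.comp_continuousOn hx)
    (fun r hr => (hd r hr).differentiableAt.differentiableWithinAt)
    (fun r hr => (hd r hr).deriv ▸ hB r hr) a ⟨le_rfl, hab⟩ b ⟨hab, le_rfl⟩ hab
  linarith

theorem le_of_inner_gradient_nonpos (hV : Differentiable ℝ V) (hx : ContinuousOn x (Icc a b))
    (hv : ∀ r ∈ Ico a b, HasDerivWithinAt x (v r) (Ico a b) r)
    (hW : ∀ r ∈ Ioo a b, ⟪∇ V (x r), v r⟫_ℝ ≤ 0) {t : ℝ} (ht : t ∈ Icc a b) :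
    V (x t) ≤ V (x a) := by
  have hd : ∀ r ∈ interior (Icc a b), HasDerivAt (fun r => V (x r)) ⟪∇ V (x r), v r⟫_ℝ r :=
    fun r hr => hasDerivAt_comp_of_mem_Ioo hV hv (by rwa [interior_Icc] at hr)
  rw [← interior_Icc] at hW
  have h := (convex_Icc a b).image_sub_le_mul_sub_of_deriv_le (f := fun r => V (x r))
    (hV.continuous.comp_continuousOn hx)
    (fun r hr => (hd r hr).differentiableAt.differentiableWithinAt)
    (fun r hr => (hd r hr).deriv ▸ hW r hr) a ⟨le_rfl, ht.1.trans ht.2⟩ t ht ht.1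
  linarith

end Gradient

section Triggered

variable {E Ω : Type*} [NormedAddCommGroup E] [InnerProductSpace ℝ E] [CompleteSpace E]
  {F : E → Ω → E} {V : E → ℝ} {γ : ℝ → ℝ} {x : ℝ → E} {u : Ω} {a b σ κ L C Λ : ℝ}

theorem norm_le_two_mul_of_short_segment (hx : ContinuousOn x (Icc a b))
    (hode : ∀ t ∈ Ico a b, HasDerivWithinAt x (F (x t) u) (Ico a b) t)
    (hFlip : ∀ t ∈ Icc a b, ‖F (x t) u - F (x a) u‖ ≤ κ * ‖x t - x a‖)
    (hgradlip : ∀ t ∈ Icc a b, ‖∇ V (x t) - ∇ V (x a)‖ ≤ L * ‖x t - x a‖)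
    (hκ : 0 < κ) (hL : 0 ≤ L) (hκτ : 2 * κ * (b - a) ≤ 1)
    (hLτ : 2 * L * ‖F (x a) u‖ * (b - a) ≤ ‖∇ V (x a)‖) {t : ℝ} (ht : t ∈ Icc a b) :
    ‖x t - x a‖ ≤ 2 * ‖F (x a) u‖ * (b - a) ∧ ‖F (x t) u‖ ≤ 2 * ‖F (x a) u‖ ∧
      ‖∇ V (x t)‖ ≤ 2 * ‖∇ V (x a)‖ := by
  have hdisp : ‖x t - x a‖ ≤ 2 * ‖F (x a) u‖ * (b - a) :=
    (norm_sub_le_two_mul_of_hasDerivWithinAt hx hode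
      (fun s hs => hFlip s (Ico_subset_Icc_self hs)) hκ (by linarith) ht).trans
      (by gcongr; exact ht.2)
  refine ⟨hdisp, ?_, ?_⟩
  · have h := mul_le_mul_of_nonneg_left hdisp hκ.le
    nlinarith [norm_le_norm_add_norm_sub' (F (x t) u) (F (x a) u), hFlip t ht,
      norm_nonneg (F (x a) u)]
  · have h := mul_le_mul_of_nonneg_left hdisp hL
    linarith [norm_le_norm_add_norm_sub' (∇ V (x t)) (∇ V (x a)), hgradlip t ht]

theorem one_sub_le_mul_of_triggered_segment (hV : Differentiable ℝ V)
    (hx : ContinuousOn x (Icc a b))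
    (hode : ∀ t ∈ Ico a b, HasDerivWithinAt x (F (x t) u) (Ico a b) t)
    (hFlip : ∀ t ∈ Icc a b, ‖F (x t) u - F (x a) u‖ ≤ κ * ‖x t - x a‖)
    (hgradlip : ∀ t ∈ Icc a b, ‖∇ V (x t) - ∇ V (x a)‖ ≤ L * ‖x t - x a‖)
    (hM : ‖∇ V (x a)‖ * ‖F (x a) u‖ + ‖F (x a) u‖ ^ 2 ≤ C * |⟪∇ V (x a), F (x a) u⟫_ℝ|)
    (hfeed : ⟪∇ V (x a), F (x a) u⟫_ℝ ≤ -γ (V (x a))) (hγpos : 0 < γ (V (x a)))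
    (hγ : γ (V (x b)) ≤ γ (V (x a)) + Λ * (V (x a) - V (x b)))
    (htrig : ⟪∇ V (x b), F (x b) u⟫_ℝ = -σ * γ (V (x b)))
    (hab : a ≤ b) (hσ : 0 ≤ σ) (hκ : 0 < κ) (hL : 0 ≤ L) (hΛ : 0 ≤ Λ)
    (hκτ : 2 * κ * (b - a) ≤ 1) (hLτ : 2 * L * C * (b - a) ≤ 1) :
    1 - σ ≤ (4 * L + 2 * κ + 4 * σ * Λ) * C * (b - a) := by
  set A := ‖F (x a) u‖
  set G := ‖∇ V (x a)‖
  set w := -⟪∇ V (x a), F (x a) u⟫_ℝ with hw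
  have hwpos : 0 < w := by linarith
  have hGA : w ≤ G * A := neg_le.1 (neg_le_of_abs_le (abs_real_inner_le_norm _ _))
  replace hM : G * A + A ^ 2 ≤ C * w := by rwa [← abs_neg, ← hw, abs_of_pos hwpos] at hM
  have hC : 0 ≤ C := nonneg_of_mul_nonneg_left (by nlinarith [norm_nonneg A]) hwpos
  have hAG : A ≤ C * G := by nlinarith [norm_nonneg (F (x a) u), norm_nonneg (∇ V (x a))]
  have hLA : 2 * L * A * (b - a) ≤ G := by
    nlinarith [mul_le_mul_of_nonneg_left hAG (by positivity : 0 ≤ 2 * L * (b - a)),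
      mul_le_mul_of_nonneg_right hLτ (norm_nonneg (∇ V (x a)))]
  have hbound := fun t (ht : t ∈ Icc a b) =>
    norm_le_two_mul_of_short_segment hx hode hFlip hgradlip hκ hL hκτ hLA ht
  have hdrop : V (x a) - V (x b) ≤ 4 * C * w * (b - a) := by
    refine sub_le_mul_sub_of_neg_le_inner_gradient hV hx hode (fun t ht => ?_) hab
    obtain ⟨-, hF, hG⟩ := hbound t (Ioo_subset_Icc_self ht)
    nlinarith [neg_le_of_abs_le (abs_real_inner_le_norm (∇ V (x t)) (F (x t) u)),
      mul_le_mul hG hF (norm_nonneg _) (by positivity)]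
  have hrise : ⟪∇ V (x b), F (x b) u⟫_ℝ + w ≤ (4 * L + 2 * κ) * C * w * (b - a) := by
    obtain ⟨hdisp, hF, -⟩ := hbound b ⟨hab, le_rfl⟩
    have hb : b ∈ Icc a b := ⟨hab, le_rfl⟩
    have hgrad : ‖∇ V (x b) - ∇ V (x a)‖ * ‖F (x b) u‖ ≤ L * (2 * A * (b - a)) * (2 * A) :=
      mul_le_mul ((hgradlip b hb).trans (mul_le_mul_of_nonneg_left hdisp hL)) hF
        (norm_nonneg _) (by positivity)
    have hvel : G * ‖F (x b) u - F (x a) u‖ ≤ G * (κ * (2 * A * (b - a))) :=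
      mul_le_mul_of_nonneg_left ((hFlip b hb).trans (mul_le_mul_of_nonneg_left hdisp hκ.le))
        (norm_nonneg _)
    have hCw : 4 * L * A ^ 2 + 2 * κ * (G * A) ≤ (4 * L + 2 * κ) * (C * w) := by
      nlinarith [mul_nonneg (norm_nonneg (F (x a) u)) (norm_nonneg (∇ V (x a)))]
    nlinarith [inner_sub_inner_le (∇ V (x a)) (F (x a) u) (∇ V (x b)) (F (x b) u),
      mul_le_mul_of_nonneg_right hCw (sub_nonneg.2 hab)]
  have hγb : σ * γ (V (x b)) ≤ σ * (w + Λ * (4 * C * w * (b - a))) :=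
    mul_le_mul_of_nonneg_left
      (hγ.trans (add_le_add (by linarith) (mul_le_mul_of_nonneg_left hdrop hΛ))) hσ
  refine le_of_mul_le_mul_right ?_ hwpos
  linarith

theorem sampled_le_initial {x : ℝ → E} {ts : ℕ → ℝ} {u : ℕ → Ω} (hV : Differentiable ℝ V)
    (hx : ∀ n, ContinuousOn x (Icc (ts n) (ts (n + 1))))
    (hode : ∀ n, ∀ s ∈ Ico (ts n) (ts (n + 1)),
      HasDerivWithinAt x (F (x s) (u n)) (Ico (ts n) (ts (n + 1))) s)
    (hW : ∀ n, ∀ s ∈ Ioo (ts n) (ts (n + 1)), ⟪∇ V (x s), F (x s) (u n)⟫_ℝ ≤ 0)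
    (hts : Monotone ts) (n : ℕ) : V (x (ts n)) ≤ V (x (ts 0)) := by
  induction n with
  | zero => rfl
  | succ n ih =>
    exact (le_of_inner_gradient_nonpos hV (hx n) (hode n) (hW n)
      ⟨hts n.le_succ, le_rfl⟩).trans ih

end Triggered

noncomputable def dwellTimeBound (σ κ L C Λ : ℝ) : ℝ :=
  min (1 / (2 * κ)) (min (1 / (2 * L * C)) ((1 - σ) / ((4 * L + 2 * κ + 4 * σ * Λ) * C)))

section DwellTimeBound

variable {σ κ L C Λ : ℝ}

theorem dwellTimeBound_pos (hσ0 : 0 ≤ σ) (hσ1 : σ < 1) (hκ : 0 < κ) (hL : 0 < L) (hC : 0 < C)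
    (hΛ : 0 ≤ Λ) : 0 < dwellTimeBound σ κ L C Λ := by
  have : 0 < 1 - σ := by linarith
  unfold dwellTimeBound
  positivity

theorem dwellTimeBound_le (hσ : 0 ≤ σ) (hκ : 0 < κ) (hL : 0 < L) (hC : 0 < C) (hΛ : 0 ≤ Λ)
    {τ : ℝ} (h : 2 * κ * τ ≤ 1 → 2 * L * C * τ ≤ 1 →
      1 - σ ≤ (4 * L + 2 * κ + 4 * σ * Λ) * C * τ) : dwellTimeBound σ κ L C Λ ≤ τ := by
  by_contra! hlt
  simp only [dwellTimeBound, lt_min_iff] at hlt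
  obtain ⟨hκτ, hLτ, hστ⟩ := hlt
  rw [lt_div_iff₀ (by positivity)] at hκτ hLτ hστ
  linarith [h (by linarith) (by linarith)]

end DwellTimeBound

theorem statement4_general
    (d m : ℕ)
    (F : EuclideanSpace ℝ (Fin d) → EuclideanSpace ℝ (Fin m) → EuclideanSpace ℝ (Fin d))
    (𝒰 : EuclideanSpace ℝ (Fin d) → EuclideanSpace ℝ (Fin m))
    (V : EuclideanSpace ℝ (Fin d) → ℝ) (γ : ℝ → ℝ) (σ : ℝ)
    (hσ0 : 0 < σ) (hσ1 : σ < 1)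
    (hγc : Continuous γ) (hγpos : ∀ v : ℝ, 0 < v → 0 < γ v)
    (hV : ContDiff ℝ 1 V) (hV0 : V 0 = 0) (hVpos : ∀ x, x ≠ 0 → 0 < V x)
    (hVrad : ∀ c : ℝ, ∃ R : ℝ, ∀ x : EuclideanSpace ℝ (Fin d), R ≤ ‖x‖ → c ≤ V x)
    (hfeed : ∀ x, x ≠ 0 → ⟪gradient V x, F x (𝒰 x)⟫_ℝ ≤ -γ (V x))
    -- Assumption 2
    (κ : EuclideanSpace ℝ (Fin d) → ℝ)
    (hκlip : ∀ xs x1 x2 : EuclideanSpace ℝ (Fin d), V x1 ≤ V xs → V x2 ≤ V xs →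
      ‖F x1 (𝒰 xs) - F x2 (𝒰 xs)‖ ≤ κ xs * ‖x1 - x2‖)
    (hκbdd : ∀ K : Set (EuclideanSpace ℝ (Fin d)), IsCompact K → ∃ C : ℝ, ∀ x ∈ K, κ x ≤ C)
    -- Assumption 3
    (hgradlip : LocallyLipschitz (gradient V))
    -- Assumption 4'
    (M : EuclideanSpace ℝ (Fin d) → ℝ)
    (hMbdd : ∀ K : Set (EuclideanSpace ℝ (Fin d)), IsCompact K → ∃ C : ℝ, ∀ x ∈ K, M x ≤ C)
    (hMineq : ∀ x, ‖gradient V x‖ * ‖F x (𝒰 x)‖ + ‖F x (𝒰 x)‖ ^ 2 ≤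
      M x * |⟪gradient V x, F x (𝒰 x)⟫_ℝ|)
    -- `γ` non-decreasing on `[0,∞)` or `C¹`
    (hγreg : MonotoneOn γ (Ici (0 : ℝ)) ∨ ContDiff ℝ 1 γ) :
    ∀ K : Set (EuclideanSpace ℝ (Fin d)), IsCompact K →
      ∃ ε > (0 : ℝ),
        ∀ (T : ℝ) (x : ℝ → EuclideanSpace ℝ (Fin d)) (ts : ℕ → ℝ),
          ContinuousOn x (Ico (0 : ℝ) T) → x 0 ∈ K →
          ts 0 = 0 → StrictMono ts → (∀ n : ℕ, ts (n + 1) < T) →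
          (∀ n : ℕ, x (ts n) ≠ 0) →
          (∀ n : ℕ, ∀ s ∈ Ico (ts n) (ts (n + 1)),
            HasDerivWithinAt x (F (x s) (𝒰 (x (ts n)))) (Ico (ts n) (ts (n + 1))) s) →
          (∀ n : ℕ, ∀ s ∈ Icc (ts n) (ts (n + 1)),
            ⟪gradient V (x s), F (x s) (𝒰 (x (ts n)))⟫_ℝ ≤ -σ * γ (V (x s))) →
          (∀ n : ℕ, ⟪gradient V (x (ts (n + 1))), F (x (ts (n + 1))) (𝒰 (x (ts n)))⟫_ℝ =
            -σ * γ (V (x (ts (n + 1))))) →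
          ∀ n : ℕ, ε ≤ ts (n + 1) - ts n := by
  have hVd : Differentiable ℝ V := hV.differentiable one_ne_zero
  have hVnn : ∀ y, 0 ≤ V y := fun y => (eq_or_ne y 0).elim (fun h => h ▸ hV0.ge)
    fun h => (hVpos y h).le
  intro K hK
  obtain ⟨c, hc⟩ := (hK.image hV.continuous).bddAbove
  have hS := isCompact_setOf_le_of_coercive hV.continuous hVrad c
  obtain ⟨κ₀, hκ₀⟩ := hκbdd _ hS
  obtain ⟨C₀, hC₀⟩ := hMbdd _ hS
  obtain ⟨L, hL⟩ := hgradlip.locallyLipschitzOn.exists_lipschitzOnWith_of_compact hS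
  obtain ⟨Λ, hΛ, hγΛ⟩ := exists_le_add_mul_sub_of_monotoneOn_or_contDiff hγreg c
  have hκ₁ : (0 : ℝ) < max κ₀ 1 := lt_max_of_lt_right one_pos
  have hC₁ : (0 : ℝ) < max C₀ 1 := lt_max_of_lt_right one_pos
  refine ⟨dwellTimeBound σ (max κ₀ 1) ↑(L + 1) (max C₀ 1) Λ,
    dwellTimeBound_pos hσ0.le hσ1 hκ₁ (by positivity) hC₁ hΛ, ?_⟩
  intro T x ts hxc hx0 hts0 hts hT hne hode hW htrig n
  have hx : ∀ n, ContinuousOn x (Icc (ts n) (ts (n + 1))) := fun n => hxc.mono fun t ht =>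
    ⟨(hts0 ▸ hts.monotone n.zero_le).trans ht.1, ht.2.trans_lt (hT n)⟩
  have hW0 : ∀ n, ∀ s ∈ Ioo (ts n) (ts (n + 1)), ⟪∇ V (x s), F (x s) (𝒰 (x (ts n)))⟫_ℝ ≤ 0 :=
    fun n s hs => (hW n s (Ioo_subset_Icc_self hs)).trans
      (by nlinarith [nonneg_of_continuous_of_pos hγc hγpos (hVnn (x s))])
  have hseg : ∀ t ∈ Icc (ts n) (ts (n + 1)), V (x t) ≤ V (x (ts n)) :=
    fun t ht => le_of_inner_gradient_nonpos hVd (hx n) (hode n) (hW0 n) ht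
  have hp : V (x (ts n)) ≤ c :=
    (sampled_le_initial hVd hx hode hW0 hts.monotone n).trans (hts0 ▸ hc ⟨_, hx0, rfl⟩)
  have hb : ts (n + 1) ∈ Icc (ts n) (ts (n + 1)) := ⟨(hts n.lt_succ_self).le, le_rfl⟩
  refine dwellTimeBound_le hσ0.le hκ₁ (by positivity) hC₁ hΛ fun hκτ hLτ =>
    one_sub_le_mul_of_triggered_segment hVd (hx n) (hode n)
      (fun t ht => (hκlip _ _ _ (hseg t ht) le_rfl).trans
        (mul_le_mul_of_nonneg_right ((hκ₀ _ hp).trans (le_max_left _ _)) (norm_nonneg _)))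
      (fun t ht => (hL.weaken le_self_add).norm_sub_le ((hseg t ht).trans hp) hp)
      ((hMineq _).trans
        (mul_le_mul_of_nonneg_right ((hC₀ _ hp).trans (le_max_left _ _)) (abs_nonneg _)))
      (hfeed _ (hne n)) (hγpos _ (hVpos _ (hne n))) (hγΛ (hVnn _) (hseg _ hb) hp) (htrig n)
      hb.1 hσ0.le hκ₁ (by positivity) hΛ hκτ hLτ

/-- Dwell-time positivity of the event-triggered algorithm, Theorem 1.
Under Assumptions 1–4' with `γ` non-decreasing or `C¹`, for every compact set `K` there is
`ε > 0` such that any trajectory of the event-triggered algorithm starting in `K` has all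
inter-sampling times `t_{n+1} - t_n ≥ ε`. -/
theorem statement4
    (d m : ℕ)
    (F : EuclideanSpace ℝ (Fin d) → EuclideanSpace ℝ (Fin m) → EuclideanSpace ℝ (Fin d))
    (U : Set (EuclideanSpace ℝ (Fin m)))
    (𝒰 : EuclideanSpace ℝ (Fin d) → EuclideanSpace ℝ (Fin m))
    (V : EuclideanSpace ℝ (Fin d) → ℝ) (γ : ℝ → ℝ) (σ : ℝ)
    (hσ0 : 0 < σ) (hσ1 : σ < 1)
    (hγc : Continuous γ) (hγpos : ∀ v : ℝ, 0 < v → 0 < γ v)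
    (hV : ContDiff ℝ 1 V) (hV0 : V 0 = 0) (hVpos : ∀ x, x ≠ 0 → 0 < V x)
    (hVrad : ∀ c : ℝ, ∃ R : ℝ, ∀ x : EuclideanSpace ℝ (Fin d), R ≤ ‖x‖ → c ≤ V x)
    (h𝒰U : ∀ x, 𝒰 x ∈ U)
    (hfeed : ∀ x, x ≠ 0 → ⟪gradient V x, F x (𝒰 x)⟫_ℝ ≤ -γ (V x))
    -- Assumption 1
    (hF : ∀ u ∈ U, LocallyLipschitz (fun x => F x u))
    -- Assumption 2
    (κ : EuclideanSpace ℝ (Fin d) → ℝ)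
    (hκlip : ∀ xs x1 x2 : EuclideanSpace ℝ (Fin d), V x1 ≤ V xs → V x2 ≤ V xs →
      ‖F x1 (𝒰 xs) - F x2 (𝒰 xs)‖ ≤ κ xs * ‖x1 - x2‖)
    (hκbdd : ∀ K : Set (EuclideanSpace ℝ (Fin d)), IsCompact K → ∃ C : ℝ, ∀ x ∈ K, κ x ≤ C)
    -- Assumption 3
    (hgradlip : LocallyLipschitz (gradient V))
    -- Assumption 4'
    (M : EuclideanSpace ℝ (Fin d) → ℝ) (hMpos : ∀ x, 0 < M x)
    (hMbdd : ∀ K : Set (EuclideanSpace ℝ (Fin d)), IsCompact K → ∃ C : ℝ, ∀ x ∈ K, M x ≤ C)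
    (hMineq : ∀ x, ‖gradient V x‖ * ‖F x (𝒰 x)‖ + ‖F x (𝒰 x)‖ ^ 2 ≤
      M x * |⟪gradient V x, F x (𝒰 x)⟫_ℝ|)
    -- `γ` non-decreasing on `[0,∞)` or `C¹`
    (hγreg : MonotoneOn γ (Ici (0 : ℝ)) ∨ ContDiff ℝ 1 γ) :
    ∀ K : Set (EuclideanSpace ℝ (Fin d)), IsCompact K →
      ∃ ε > (0 : ℝ),
        ∀ (T : ℝ) (x : ℝ → EuclideanSpace ℝ (Fin d)) (ts : ℕ → ℝ),
          ContinuousOn x (Ico (0 : ℝ) T) → x 0 ∈ K →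
          ts 0 = 0 → StrictMono ts → (∀ n : ℕ, ts (n + 1) < T) →
          (∀ n : ℕ, x (ts n) ≠ 0) →
          (∀ n : ℕ, ∀ s ∈ Ico (ts n) (ts (n + 1)),
            HasDerivWithinAt x (F (x s) (𝒰 (x (ts n)))) (Ico (ts n) (ts (n + 1))) s) →
          (∀ n : ℕ, ∀ s ∈ Icc (ts n) (ts (n + 1)),
            ⟪gradient V (x s), F (x s) (𝒰 (x (ts n)))⟫_ℝ ≤ -σ * γ (V (x s))) →
          (∀ n : ℕ, ⟪gradient V (x (ts (n + 1))), F (x (ts (n + 1))) (𝒰 (x (ts n)))⟫_ℝ =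
            -σ * γ (V (x (ts (n + 1))))) →
          ∀ n : ℕ, ε ≤ ts (n + 1) - ts n :=
  statement4_general d m F 𝒰 V γ σ hσ0 hσ1 hγc hγpos hV hV0 hVpos hVrad hfeed κ hκlip hκbdd hgradlip
    M hMbdd hMineq hγreg
end
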